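/- Let A, B be positive invertible bounded operators on a complex Hilbert space H such that m·1_H ≤ 1_H ≤ A^(−1/2) B A^(−1/2) ≤ M·1_H for real scalars 0 < m ≤ 1 ≤ M, and let Φ be a unital positive linear map on B(H). Then for every p with 1 ≤ p ≤ 2, Φ(A ♮_p B) ≤ Φ(A) ♮_p Φ(B) + p·(M^(p−1) − m^(p−1))·Φ(B − A). -/

import Mathlib

/-!
Write `C = A^(-1/2) B A^(-1/2)`, so that `1 ≤ C ≤ M`. On `[1, M]` the function `x ^ p` lies above
its tangent `1 + p (x - 1)` at `1` and below the line `1 + p M^(p-1) (x - 1)`; by the functional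
calculus and conjugation by `A^(1/2)` this gives `A + p (B - A) ≤ A ♮ₚ B ≤ A + p M^(p-1) (B - A)`.
Apply `Φ` to the upper bound and use the lower bound for `Φ A, Φ B` (`Φ A` is again invertible,
since `A ≥ r` for some `r > 0`). The gap `p (M^(p-1) - 1) Φ (B - A)` is at most
`p (M^(p-1) - m^(p-1)) Φ (B - A)` because `m ≤ 1` and `B ≥ A`.
-/

open scoped NNReal

variable {H : Type*} [NormedAddCommGroup H] [InnerProductSpace ℂ H] [CompleteSpace H]

/-- The weighted operator geometric mean `A ♮ₚ B = A^(1/2) (A^(-1/2) B A^(-1/2))^p A^(1/2)`,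
operator powers being taken in the continuous functional calculus. -/
noncomputable def geomMean (A B : H →L[ℂ] H) (p : ℝ) : H →L[ℂ] H :=
  A ^ ((1 : ℝ) / 2) * ((A ^ (-(1 : ℝ) / 2)) * B * (A ^ (-(1 : ℝ) / 2))) ^ p * A ^ ((1 : ℝ) / 2)

/-- The Tsallis relative operator entropy `T_p(A|B) = (A ♮ₚ B - A) / p`. -/
noncomputable def tsallis (A B : H →L[ℂ] H) (p : ℝ) : H →L[ℂ] H :=
  p⁻¹ • (geomMean A B p - A)

namespace Real

lemma one_add_mul_sub_one_le_rpow {p x : ℝ} (hp : 1 ≤ p) (hx : 0 ≤ x) :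
    1 + p * (x - 1) ≤ x ^ p := by
  simpa using one_add_mul_self_le_rpow_one_add (s := x - 1) (by linarith) hp

/-- Bernoulli's inequality at `x⁻¹`, multiplied by `x ^ p`. -/
lemma rpow_sub_one_le_mul_rpow_sub_one_mul {p x : ℝ} (hp : 1 ≤ p) (hx : 0 < x) :
    x ^ p - 1 ≤ p * x ^ (p - 1) * (x - 1) := by
  have h := one_add_mul_sub_one_le_rpow hp (inv_nonneg.2 hx.le)
  rw [inv_rpow hx.le] at h
  have hxp := rpow_pos_of_pos hx p
  have h' := mul_le_mul_of_nonneg_left h hxp.le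
  rw [mul_inv_cancel₀ hxp.ne'] at h'
  rw [rpow_sub_one hx.ne']
  field_simp at h' ⊢
  nlinarith

lemma rpow_le_one_add_mul_sub_one {p x M : ℝ} (hp : 1 ≤ p) (hx : 1 ≤ x) (hxM : x ≤ M) :
    x ^ p ≤ 1 + p * M ^ (p - 1) * (x - 1) := by
  have hpow : x ^ (p - 1) ≤ M ^ (p - 1) := rpow_le_rpow (by linarith) hxM (by linarith)
  have := rpow_sub_one_le_mul_rpow_sub_one_mul hp (by linarith : 0 < x)
  have hpx : 0 ≤ p * (x - 1) := mul_nonneg (by linarith) (by linarith)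
  nlinarith [mul_le_mul_of_nonneg_right hpow hpx]

end Real

lemma cfc_one_add_mul_sub_one {𝒜 : Type*} [CStarAlgebra 𝒜] (a : 𝒜) (k : ℝ)
    (ha : IsSelfAdjoint a := by cfc_tac) :
    cfc (fun x : ℝ => 1 + k * (x - 1)) a = 1 + k • (a - 1) := by
  rw [cfc_add .., cfc_const_one .., cfc_const_mul .., cfc_sub .., cfc_id' .., cfc_const_one ..]

namespace CFC

variable {𝒜 : Type*} [CStarAlgebra 𝒜] [PartialOrder 𝒜] [StarOrderedRing 𝒜]

lemma one_add_smul_sub_one_le_rpow {a : 𝒜} {p : ℝ} (ha : 0 ≤ a) (hp : 1 ≤ p) :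
    1 + p • (a - 1) ≤ a ^ p := by
  rw [rpow_eq_cfc_real ha, ← cfc_one_add_mul_sub_one a p]
  exact cfc_mono (fun x hx ↦ Real.one_add_mul_sub_one_le_rpow hp (spectrum_nonneg_of_nonneg ha hx))
    (by fun_prop) ((Real.continuous_rpow_const (by linarith)).continuousOn)

lemma rpow_le_one_add_smul_sub_one {a : 𝒜} {p M : ℝ} (h1a : 1 ≤ a) (haM : a ≤ M • 1)
    (hp : 1 ≤ p) : a ^ p ≤ 1 + (p * M ^ (p - 1)) • (a - 1) := by
  have ha : 0 ≤ a := zero_le_one.trans h1a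
  rw [← Algebra.algebraMap_eq_smul_one, le_algebraMap_iff_spectrum_le] at haM
  rw [one_le_iff (R := ℝ) a] at h1a
  rw [rpow_eq_cfc_real ha, ← cfc_one_add_mul_sub_one a]
  exact cfc_mono (fun x hx ↦ Real.rpow_le_one_add_mul_sub_one hp (h1a x hx) (haM x hx))
    ((Real.continuous_rpow_const (by linarith)).continuousOn) (by fun_prop)

lemma rpow_half_mul_rpow_half {a : 𝒜} (ha : 0 ≤ a) :
    a ^ ((1 : ℝ) / 2) * a ^ ((1 : ℝ) / 2) = a := by
  rw [← sqrt_eq_rpow, sqrt_mul_sqrt_self a]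

lemma rpow_half_mul_conj_rpow_neg_half {a : 𝒜} (ha : IsStrictlyPositive a) (b : 𝒜) :
    a ^ ((1 : ℝ) / 2) * (a ^ (-(1 : ℝ) / 2) * b * a ^ (-(1 : ℝ) / 2)) * a ^ ((1 : ℝ) / 2) = b := by
  have h₁ := rpow_mul_rpow_neg ((1 : ℝ) / 2) ha
  have h₂ := rpow_neg_mul_rpow ((1 : ℝ) / 2) ha
  rw [← neg_div] at h₁ h₂
  calc _ = (a ^ ((1 : ℝ) / 2) * a ^ (-(1 : ℝ) / 2)) * b *
        (a ^ (-(1 : ℝ) / 2) * a ^ ((1 : ℝ) / 2)) := by simp only [mul_assoc]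
    _ = b := by rw [h₁, h₂, one_mul, mul_one]

lemma rpow_half_mul_one_add_smul_mul_rpow_half {a : 𝒜} (ha : IsStrictlyPositive a) (b : 𝒜)
    (k : ℝ) :
    a ^ ((1 : ℝ) / 2) * (1 + k • (a ^ (-(1 : ℝ) / 2) * b * a ^ (-(1 : ℝ) / 2) - 1)) *
      a ^ ((1 : ℝ) / 2) = a + k • (b - a) := by
  simp only [mul_add, add_mul, mul_sub, sub_mul, mul_smul_comm, smul_mul_assoc, mul_one,
    rpow_half_mul_rpow_half ha.nonneg, rpow_half_mul_conj_rpow_neg_half ha]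

lemma le_of_one_le_rpow_neg_half_conj {a b : 𝒜} (ha : IsStrictlyPositive a)
    (h : 1 ≤ a ^ (-(1 : ℝ) / 2) * b * a ^ (-(1 : ℝ) / 2)) : a ≤ b := by
  have := conjugate_le_conjugate_of_nonneg h (rpow_nonneg (a := a) (y := (1 : ℝ) / 2))
  rwa [mul_one, rpow_half_mul_rpow_half ha.nonneg, rpow_half_mul_conj_rpow_neg_half ha] at this

end CFC

lemma PositiveLinearMap.isStrictlyPositive_map {𝒜 ℬ : Type*} [CStarAlgebra 𝒜] [PartialOrder 𝒜]
    [StarOrderedRing 𝒜] [CStarAlgebra ℬ] [PartialOrder ℬ] [StarOrderedRing ℬ]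
    (Φ : 𝒜 →ₚ[ℂ] ℬ) (hΦ : Φ 1 = 1) {a : 𝒜} (ha : IsStrictlyPositive a) :
    IsStrictlyPositive (Φ a) := by
  rcases subsingleton_or_nontrivial 𝒜 with h𝒜 | h𝒜
  · rw [Subsingleton.elim a 1, hΦ]
    exact isStrictlyPositive_one
  obtain ⟨r, hr, hra⟩ := (CFC.exists_pos_algebraMap_le_iff ha.isSelfAdjoint).2
    fun x hx ↦ ha.spectrum_pos hx
  refine (isStrictlyPositive_algebraMap hr).of_le ?_
  calc algebraMap ℝ ℬ r = Φ (algebraMap ℝ 𝒜 r) := by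
        rw [Algebra.algebraMap_eq_smul_one, Algebra.algebraMap_eq_smul_one, map_smul_of_tower, hΦ]
    _ ≤ Φ a := OrderHomClass.mono Φ hra

section GeomMean

variable {A B : H →L[ℂ] H} {p : ℝ}

lemma geomMean_le_add_smul_sub (hA : IsStrictlyPositive A) {M : ℝ}
    (h1 : 1 ≤ A ^ (-(1 : ℝ) / 2) * B * A ^ (-(1 : ℝ) / 2))
    (hM : A ^ (-(1 : ℝ) / 2) * B * A ^ (-(1 : ℝ) / 2) ≤ M • 1) (hp : 1 ≤ p) :
    geomMean A B p ≤ A + (p * M ^ (p - 1)) • (B - A) := by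
  rw [← CFC.rpow_half_mul_one_add_smul_mul_rpow_half hA]
  exact conjugate_le_conjugate_of_nonneg (CFC.rpow_le_one_add_smul_sub_one h1 hM hp)
    CFC.rpow_nonneg

lemma add_smul_sub_le_geomMean (hA : IsStrictlyPositive A) (hB : 0 ≤ B) (hp : 1 ≤ p) :
    A + p • (B - A) ≤ geomMean A B p := by
  rw [← CFC.rpow_half_mul_one_add_smul_mul_rpow_half hA]
  have hC : 0 ≤ A ^ (-(1 : ℝ) / 2) * B * A ^ (-(1 : ℝ) / 2) :=
    conjugate_nonneg_of_nonneg hB CFC.rpow_nonneg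
  exact conjugate_le_conjugate_of_nonneg (CFC.one_add_smul_sub_one_le_rpow hC hp)
    CFC.rpow_nonneg

end GeomMean

theorem stmt_7_general (A B : H →L[ℂ] H) (hA : 0 ≤ A) (hB : 0 ≤ B)
    (hAinv : IsUnit A)
    (m M : ℝ) (hm : 0 < m) (hm1 : m ≤ 1)
    (hmid : (1 : H →L[ℂ] H) ≤ (A ^ (-(1 : ℝ) / 2)) * B * (A ^ (-(1 : ℝ) / 2)))
    (hup : (A ^ (-(1 : ℝ) / 2)) * B * (A ^ (-(1 : ℝ) / 2)) ≤ M • (1 : H →L[ℂ] H))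
    (Φ : (H →L[ℂ] H) →ₗ[ℂ] (H →L[ℂ] H)) (hΦ1 : Φ 1 = 1)
    (hΦpos : ∀ X : H →L[ℂ] H, 0 ≤ X → 0 ≤ Φ X)
    (p : ℝ) (hp1 : 1 ≤ p) :
    Φ (geomMean A B p) ≤ geomMean (Φ A) (Φ B) p + (p * (M ^ (p - 1) - m ^ (p - 1))) • Φ (B - A) := by
  have hApos : IsStrictlyPositive A := hAinv.isStrictlyPositive hA
  have hΦA : IsStrictlyPositive (Φ A) :=
    (PositiveLinearMap.mk₀ Φ hΦpos).isStrictlyPositive_map hΦ1 hApos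
  have hΦBA : 0 ≤ Φ (B - A) :=
    hΦpos _ (sub_nonneg.2 (CFC.le_of_one_le_rpow_neg_half_conj hApos hmid))
  have hcoeff : p * M ^ (p - 1) ≤ p + p * (M ^ (p - 1) - m ^ (p - 1)) := by
    nlinarith [Real.rpow_le_one hm.le hm1 (by linarith : 0 ≤ p - 1)]
  calc Φ (geomMean A B p) ≤ Φ (A + (p * M ^ (p - 1)) • (B - A)) :=
        (PositiveLinearMap.mk₀ Φ hΦpos).monotone' (geomMean_le_add_smul_sub hApos hmid hup hp1)
    _ = Φ A + (p * M ^ (p - 1)) • Φ (B - A) := by rw [map_add, LinearMap.map_smul_of_tower]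
    _ ≤ Φ A + (p + p * (M ^ (p - 1) - m ^ (p - 1))) • Φ (B - A) := by gcongr
    _ = Φ A + p • (Φ B - Φ A) + (p * (M ^ (p - 1) - m ^ (p - 1))) • Φ (B - A) := by
        rw [add_smul, map_sub]; abel
    _ ≤ geomMean (Φ A) (Φ B) p + (p * (M ^ (p - 1) - m ^ (p - 1))) • Φ (B - A) := by
        gcongr
        exact add_smul_sub_le_geomMean hΦA (hΦpos B hB) hp1

/-- Corollary 2.3 (3): converse of Ando's inequality for `1 ≤ p ≤ 2`. -/
theorem stmt_7 (A B : H →L[ℂ] H) (hA : 0 ≤ A) (hB : 0 ≤ B)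
    (hAinv : IsUnit A) (hBinv : IsUnit B)
    (m M : ℝ) (hm : 0 < m) (hm1 : m ≤ 1) (h1M : 1 ≤ M)
    (hlow : m • (1 : H →L[ℂ] H) ≤ 1)
    (hmid : (1 : H →L[ℂ] H) ≤ (A ^ (-(1 : ℝ) / 2)) * B * (A ^ (-(1 : ℝ) / 2)))
    (hup : (A ^ (-(1 : ℝ) / 2)) * B * (A ^ (-(1 : ℝ) / 2)) ≤ M • (1 : H →L[ℂ] H))
    (Φ : (H →L[ℂ] H) →ₗ[ℂ] (H →L[ℂ] H)) (hΦ1 : Φ 1 = 1)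
    (hΦpos : ∀ X : H →L[ℂ] H, 0 ≤ X → 0 ≤ Φ X)
    (p : ℝ) (hp1 : 1 ≤ p) (hp2 : p ≤ 2) :
    Φ (geomMean A B p) ≤ geomMean (Φ A) (Φ B) p + (p * (M ^ (p - 1) - m ^ (p - 1))) • Φ (B - A) :=
  stmt_7_general A B hA hB hAinv m M hm hm1 hmid hup Φ hΦ1 hΦpos p hp1
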